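/- arXiv:1805.00384 — 2 statements merged into one kernel-verified Lean document; each statement's English description precedes it below -/
import Mathlib

section
/- Let ι and κ be finite index types, let (A_i)_{i∈ι} and (B_j)_{j∈κ} be families of nonabelian simple groups, and assume that for all i ∈ ι and j ∈ κ the groups A_i and B_j are not isomorphic. Set A = ∏_{i∈ι} A_i and B = ∏_{j∈κ} B_j. Then every subgroup H of A × B whose two coordinate projections map H onto A and onto B equals A × B. -/
/-!
Let `N = {a | (a, 1) ∈ H}` and `M = {b | (1, b) ∈ H}`. By Goursat's lemma these are normal and
`(∏ A i) ⧸ N ≃* (∏ B j) ⧸ M`. A proper normal subgroup of a finite product of nonabelian simple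
groups has trivial projection to some factor `A i` (otherwise commutators with elements of that
factor put the whole factor inside it). Then `A i` is a quotient of `(∏ A i) ⧸ N ≃* (∏ B j) ⧸ M`,
hence a simple quotient of `∏ B j`, and such a quotient is isomorphic to some `B j`. So `N = ⊤`,
symmetrically `M = ⊤`, and `H ⊇ N × M = ⊤`.
-/

open Function Subgroup

open scoped commutatorElement

namespace Pi

section DecidableEq

variable {ι : Type*} [DecidableEq ι] {G : ι → Type*} [∀ i, Group (G i)]

theorem mul_mulSingle_mul_inv (p : ∀ i, G i) (i : ι) (x : G i) :
    p * mulSingle i x * p⁻¹ = mulSingle i (p i * x * (p i)⁻¹) := by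
  funext k
  by_cases hk : k = i
  · subst hk; simp
  · simp [mulSingle_eq_of_ne hk]

theorem commutatorElement_mulSingle (p : ∀ i, G i) (i : ι) (x : G i) :
    ⁅p, mulSingle i x⁆ = mulSingle i ⁅p i, x⁆ := by
  rw [commutatorElement_def, mul_mulSingle_mul_inv, ← mulSingle_inv, ← mulSingle_mul,
    commutatorElement_def]

theorem normal_range_mulSingle (i : ι) : (MonoidHom.mulSingle G i).range.Normal :=
  ⟨by rintro _ ⟨x, rfl⟩ p; exact ⟨_, (mul_mulSingle_mul_inv p i x).symm⟩⟩

theorem mulSingle_commutatorElement_mem {N : Subgroup (∀ i, G i)} [N.Normal] {p : ∀ i, G i}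
    (hp : p ∈ N) (i : ι) (x : G i) : mulSingle i ⁅p i, x⁆ ∈ N := by
  rw [← commutatorElement_mulSingle]
  exact commutator_le_left N ⊤ (commutator_mem_commutator hp (mem_top _))

theorem mulSingle_mem_of_map_evalMonoidHom_ne_bot {i : ι} [IsSimpleGroup (G i)]
    (hnab : ∃ a b : G i, a * b ≠ b * a) {N : Subgroup (∀ i, G i)} [N.Normal]
    (hN : N.map (evalMonoidHom G i) ≠ ⊥) (a : G i) : mulSingle i a ∈ N := by
  have hmap : N.map (evalMonoidHom G i) = ⊤ :=
    ((‹N.Normal›.map _ (surjective_eval i)).eq_bot_or_eq_top).resolve_left hN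
  suffices N.comap (MonoidHom.mulSingle G i) = ⊤ from mem_comap.1 (this ▸ mem_top a)
  refine ((‹N.Normal›.comap _).eq_bot_or_eq_top).resolve_left fun hbot => ?_
  obtain ⟨x, b, hxb⟩ := hnab
  obtain ⟨p, hp, rfl⟩ : x ∈ N.map (evalMonoidHom G i) := hmap ▸ mem_top x
  have : ⁅p i, b⁆ ∈ N.comap (MonoidHom.mulSingle G i) := mulSingle_commutatorElement_mem hp i b
  rw [hbot, mem_bot, commutatorElement_eq_one_iff_mul_comm] at this
  exact hxb this

end DecidableEq

variable {ι : Type*} [Finite ι] {G : ι → Type*} [∀ i, Group (G i)] [∀ i, IsSimpleGroup (G i)]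

theorem normal_eq_top_of_map_evalMonoidHom_ne_bot (hnab : ∀ i, ∃ a b : G i, a * b ≠ b * a)
    {N : Subgroup (∀ i, G i)} [N.Normal] (hN : ∀ i, N.map (evalMonoidHom G i) ≠ ⊥) : N = ⊤ := by
  classical
  exact eq_top_iff.2 fun p _ => pi_mem_of_mulSingle_mem p fun i =>
    mulSingle_mem_of_map_evalMonoidHom_ne_bot (hnab i) (hN i) (p i)

theorem exists_mulEquiv_of_surjective {S : Type*} [Group S] [IsSimpleGroup S]
    (f : (∀ i, G i) →* S) (hf : Surjective f) : ∃ i, Nonempty (G i ≃* S) := by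
  classical
  obtain ⟨i, hi⟩ : ∃ i, f.comp (MonoidHom.mulSingle G i) ≠ 1 := by
    by_contra! h
    have hf1 : f = 1 := MonoidHom.ker_eq_top_iff.1 <| eq_top_iff.2 fun p _ =>
      pi_mem_of_mulSingle_mem p fun i => MonoidHom.mem_ker.2 (DFunLike.congr_fun (h i) (p i))
    obtain ⟨s, hs⟩ := exists_ne (1 : S)
    obtain ⟨p, rfl⟩ := hf s
    exact hs (DFunLike.congr_fun hf1 p)
  set g := f.comp (MonoidHom.mulSingle G i)
  have hinj : Injective g := g.ker_eq_bot_iff.1 <|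
    g.normal_ker.eq_bot_or_eq_top.resolve_right (mt MonoidHom.ker_eq_top_iff.1 hi)
  have hrange : g.range.Normal := by
    rw [MonoidHom.range_comp]
    exact (normal_range_mulSingle i).map f hf
  have hsurj : Surjective g := MonoidHom.range_eq_top.1 <|
    hrange.eq_bot_or_eq_top.resolve_left (mt MonoidHom.range_eq_bot_iff.1 hi)
  exact ⟨i, ⟨MulEquiv.ofBijective g ⟨hinj, hsurj⟩⟩⟩

end Pi

theorem QuotientGroup.exists_surjective_of_mulEquiv {G H S : Type*} [Group G] [Group H]
    [Group S] {N : Subgroup G} [N.Normal] {M : Subgroup H} [M.Normal] (φ : G ⧸ N ≃* H ⧸ M)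
    (e : G →* S) (he : Surjective e) (hle : N ≤ e.ker) : ∃ f : H →* S, Surjective f :=
  ⟨(lift N e hle).comp (φ.symm.toMonoidHom.comp (mk' M)),
    (lift_surjective_of_surjective N e he hle).comp (φ.symm.surjective.comp (mk'_surjective M))⟩

theorem Pi.normal_eq_top_of_quotient_mulEquiv {ι κ : Type*} [Finite ι] [Finite κ]
    {A : ι → Type*} {B : κ → Type*} [∀ i, Group (A i)] [∀ j, Group (B j)]
    [∀ i, IsSimpleGroup (A i)] [∀ j, IsSimpleGroup (B j)]
    (hnab : ∀ i, ∃ a b : A i, a * b ≠ b * a) (hnoiso : ∀ i j, IsEmpty (B j ≃* A i))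
    {N : Subgroup (∀ i, A i)} [N.Normal] {M : Subgroup (∀ j, B j)} [M.Normal]
    (φ : (∀ i, A i) ⧸ N ≃* (∀ j, B j) ⧸ M) : N = ⊤ := by
  refine Pi.normal_eq_top_of_map_evalMonoidHom_ne_bot hnab fun i hi => ?_
  obtain ⟨f, hf⟩ := QuotientGroup.exists_surjective_of_mulEquiv φ (Pi.evalMonoidHom A i)
    (surjective_eval i) ((Subgroup.map_eq_bot_iff _).1 hi)
  obtain ⟨j, ⟨ψ⟩⟩ := Pi.exists_mulEquiv_of_surjective f hf
  exact (hnoiso i j).false ψ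

/-- If `A = ∏ A i` and `B = ∏ B j` are finite products of nonabelian simple groups
with no common factor (no `A i` is isomorphic to any `B j`), then every subdirect
subgroup of `A × B` is all of `A × B`. -/
theorem subdirect_of_products_without_common_factor_eq_top
    {ι κ : Type*} [Finite ι] [Finite κ]
    (A : ι → Type*) (B : κ → Type*)
    [∀ i, Group (A i)] [∀ j, Group (B j)]
    [∀ i, IsSimpleGroup (A i)] [∀ j, IsSimpleGroup (B j)]
    (hAnab : ∀ i, ∃ a b : A i, a * b ≠ b * a)
    (hBnab : ∀ j, ∃ a b : B j, a * b ≠ b * a)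
    (hnoiso : ∀ i j, IsEmpty (A i ≃* B j))
    (H : Subgroup ((∀ i, A i) × (∀ j, B j)))
    (hA : Subgroup.map (MonoidHom.fst (∀ i, A i) (∀ j, B j)) H = ⊤)
    (hB : Subgroup.map (MonoidHom.snd (∀ i, A i) (∀ j, B j)) H = ⊤) :
    H = ⊤ := by
  have hH₁ : Surjective (Prod.fst ∘ H.subtype) := fun a => by
    obtain ⟨x, hx, rfl⟩ := hA ▸ mem_top a
    exact ⟨⟨x, hx⟩, rfl⟩
  have hH₂ : Surjective (Prod.snd ∘ H.subtype) := fun b => by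
    obtain ⟨x, hx, rfl⟩ := hB ▸ mem_top b
    exact ⟨⟨x, hx⟩, rfl⟩
  have := normal_goursatFst hH₁
  have := normal_goursatSnd hH₂
  obtain ⟨φ, -⟩ := goursat_surjective hH₁ hH₂
  have hFst : H.goursatFst = ⊤ := Pi.normal_eq_top_of_quotient_mulEquiv hAnab
    (fun i j => ⟨fun ψ => (hnoiso i j).false ψ.symm⟩) φ
  have hSnd : H.goursatSnd = ⊤ := Pi.normal_eq_top_of_quotient_mulEquiv hBnab
    (fun j i => hnoiso i j) φ.symm
  rw [eq_top_iff, ← top_prod_top, ← hFst, ← hSnd]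
  exact goursatFst_prod_goursatSnd_le H
end

section
/- Let r ≥ 2, let A = ∏_{i=1}^r A_i be a finite product of nonabelian simple groups, let B be a simple group, and let H be a proper subgroup of A × B whose two coordinate projections map H onto A and onto B. Then there exists an index j such that the image of H under the canonical projection A × B → (∏_{i≠j} A_i) × B is a proper subgroup of (∏_{i≠j} A_i) × B. -/
/-!
Since `B` is simple and `H` is a proper subdirect subgroup, `H` meets `1 × B` trivially, so `H`
is the graph of a homomorphism `f : ∏ A_i → B`. If deleting the factor `A_j` gave a surjective
image, the point `(1, b)` would lift to `H`, i.e. `f` would already map `A_j` onto `B`. Two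
distinct factors commute in the product, so if this held for every `j` then `B` would be abelian;
but then `f` kills the nonabelian simple group `A_j`, contradicting `B ≠ 1`.
-/

open Function

namespace Subgroup

variable {G K : Type*} [Group G] [Group K]

lemma surjective_comp_subtype_of_map_eq_top {I : Subgroup G} {f : G →* K} (h : I.map f = ⊤) :
    Surjective (f ∘ I.subtype) :=
  MonoidHom.range_eq_top.1
    (by rwa [MonoidHom.range_comp, range_subtype] : (f.comp I.subtype).range = ⊤)

variable {I : Subgroup (G × K)}

lemma goursatSnd_eq_bot_of_ne_top [IsSimpleGroup K]
    (hI₁ : Surjective (Prod.fst ∘ I.subtype)) (hI₂ : Surjective (Prod.snd ∘ I.subtype))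
    (hI : I ≠ ⊤) : I.goursatSnd = ⊥ := by
  refine (IsSimpleGroup.eq_bot_or_eq_top_of_normal _ (normal_goursatSnd hI₂)).resolve_right ?_
  intro htop
  refine hI (eq_top_iff.2 fun ⟨g, k⟩ _ => ?_)
  obtain ⟨⟨⟨g', k'⟩, hx⟩, rfl : g' = g⟩ := hI₁ g
  have : (1, k'⁻¹ * k) ∈ I := mem_goursatSnd.1 (htop ▸ mem_top _)
  simpa using mul_mem hx this

lemma exists_eq_graph_of_goursatSnd_eq_bot (hI₁ : Surjective (Prod.fst ∘ I.subtype))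
    (hI : I.goursatSnd = ⊥) : ∃ f : G →* K, I = f.graph := by
  refine exists_eq_graph ⟨fun x y hxy => ?_, hI₁⟩
  replace hxy : (x : G × K).1 = (y : G × K).1 := hxy
  have hmem : ((1 : G), (x : G × K).2⁻¹ * (y : G × K).2) ∈ I := by
    simpa [Prod.mul_def, hxy] using (x⁻¹ * y).2
  rw [← mem_goursatSnd, hI, mem_bot, inv_mul_eq_one] at hmem
  exact Subtype.ext (Prod.ext hxy hmem)

end Subgroup

lemma IsSimpleGroup.eq_one_of_commute_map {G B : Type*} [Group G] [IsSimpleGroup G] [Group B]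
    (hG : ∃ a b : G, a * b ≠ b * a) (φ : G →* B) (hφ : ∀ x y, Commute (φ x) (φ y)) :
    φ = 1 := by
  obtain ⟨a, b, hab⟩ := hG
  have hmem : a * b * a⁻¹ * b⁻¹ ∈ φ.ker := by
    simp [MonoidHom.mem_ker, (hφ a b).eq]
  have hne : φ.ker ≠ ⊥ := fun h => hab <| by
    rwa [h, Subgroup.mem_bot, mul_inv_eq_one, mul_inv_eq_iff_eq_mul] at hmem
  exact MonoidHom.ker_eq_top_iff.1 <|
    (IsSimpleGroup.eq_bot_or_eq_top_of_normal _ inferInstance).resolve_left hne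

namespace MonoidHom

variable {ι : Type*} [DecidableEq ι] {A : ι → Type*} [∀ i, Group (A i)] {B : Type*} [Group B]
  (f : (∀ i, A i) →* B)

lemma surjective_comp_mulSingle_of_map_graph_eq_top (j : ι)
    (h : f.graph.map ((pi fun i : {i // i ≠ j} => Pi.evalMonoidHom A i.1).prodMap
      (id B)) = ⊤) :
    Surjective (f.comp (mulSingle A j)) := by
  intro b
  obtain ⟨⟨a, b'⟩, hab : f a = b', heq⟩ :=
    h.ge (Subgroup.mem_top ((fun _ => 1, b) : (∀ i : {i // i ≠ j}, A i) × B))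
  refine ⟨a j, ?_⟩
  have ha : Pi.mulSingle j (a j) = a := by
    ext i
    by_cases hi : i = j
    · subst hi; simp
    · rw [Pi.mulSingle_eq_of_ne hi]
      exact (congrFun (congrArg Prod.fst heq) ⟨i, hi⟩).symm
  simpa [ha, hab] using congrArg Prod.snd heq

lemma commute_of_surjective_comp_mulSingle {i j : ι} (hij : i ≠ j)
    (hi : Surjective (f.comp (mulSingle A i)))
    (hj : Surjective (f.comp (mulSingle A j))) (x y : B) : Commute x y := by
  obtain ⟨a, rfl⟩ := hi x
  obtain ⟨b, rfl⟩ := hj y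
  exact (Pi.mulSingle_commute hij a b).map f

end MonoidHom

/-- Lemma 6.3(4), abstract form: if `A = ∏_{i=1}^r A_i` (`r ≥ 2`) is a finite product
of nonabelian simple groups, `B` is simple, and `H` is a proper subdirect subgroup of
`A × B`, then for some index `j` the image of `H` in `(∏_{i ≠ j} A_i) × B` is proper. -/
theorem proper_subdirect_image_proper_after_removing_factor
    (r : ℕ) (hr : 2 ≤ r) (A : Fin r → Type*)
    [∀ i, Group (A i)] [∀ i, IsSimpleGroup (A i)]
    (hnab : ∀ i, ∃ a b : A i, a * b ≠ b * a)
    {B : Type*} [Group B] [IsSimpleGroup B]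
    (H : Subgroup ((∀ i, A i) × B))
    (hA : Subgroup.map (MonoidHom.fst (∀ i, A i) B) H = ⊤)
    (hB : Subgroup.map (MonoidHom.snd (∀ i, A i) B) H = ⊤)
    (hne : H ≠ ⊤) :
    ∃ j : Fin r,
      Subgroup.map
        ((Pi.monoidHom fun i : {i : Fin r // i ≠ j} => Pi.evalMonoidHom A i.1).prodMap
          (MonoidHom.id B)) H
        ≠ ⊤ := by
  by_contra! hcon
  have hA' := Subgroup.surjective_comp_subtype_of_map_eq_top hA
  have hB' := Subgroup.surjective_comp_subtype_of_map_eq_top hB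
  obtain ⟨f, rfl⟩ := Subgroup.exists_eq_graph_of_goursatSnd_eq_bot hA'
    (Subgroup.goursatSnd_eq_bot_of_ne_top hA' hB' hne)
  have hsurj (j : Fin r) := f.surjective_comp_mulSingle_of_map_graph_eq_top j (hcon j)
  let j₀ : Fin r := ⟨0, by omega⟩
  let j₁ : Fin r := ⟨1, by omega⟩
  have hcomm := f.commute_of_surjective_comp_mulSingle (i := j₀) (j := j₁)
    (by simp [j₀, j₁, Fin.ext_iff]) (hsurj j₀) (hsurj j₁)
  have htriv := IsSimpleGroup.eq_one_of_commute_map (hnab j₀)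
    (f.comp (MonoidHom.mulSingle A j₀)) fun _ _ => hcomm _ _
  obtain ⟨b, hb⟩ := exists_ne (1 : B)
  obtain ⟨a, rfl⟩ := hsurj j₀ b
  exact hb (DFunLike.congr_fun htriv a)
end
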